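/- arXiv:math/0610373 — 12 statements merged into one kernel-verified Lean document; each statement's English description precedes it below -/
import Mathlib

section
/- The sticking topology on ℝ^[0,∞) is coarser than the topology of locally uniform convergence (uniform convergence on compact sets). -/
open scoped NNReal
open Filter Topology

/-- The elementary sticky neighbourhood `E^ε_{t₁,…,t_k}(f)`. -/
def stickyNhdSet (f : ℝ≥0 → ℝ) (ε : ℝ) (T : Finset ℝ≥0) : Set (ℝ≥0 → ℝ) :=
  {g | ∃ η > (0:ℝ), ∀ t : ℝ≥0, (∃ t' ∈ T, |(t:ℝ) - (t':ℝ)| < η) → |f t - g t| < ε}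

/-- The sticking topology on `ℝ^[0,∞)`: a set is open iff it contains an elementary
neighbourhood of each of its points. -/
noncomputable def stickyTop : TopologicalSpace (ℝ≥0 → ℝ) :=
  TopologicalSpace.mkOfNhds fun f =>
    ⨅ (ε : ℝ) (_ : 0 < ε) (T : Finset ℝ≥0), Filter.principal (stickyNhdSet f ε T)

/-- The topology of locally uniform convergence (uniform convergence on compact sets). -/
noncomputable def locUnifTop : TopologicalSpace (ℝ≥0 → ℝ) :=
  TopologicalSpace.mkOfNhds fun f =>
    ⨅ (ε : ℝ) (_ : 0 < ε) (K : Set ℝ≥0) (_ : IsCompact K),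
      Filter.principal {g | ∀ t ∈ K, |f t - g t| < ε}

theorem locUnif_le_sticky (f : ℝ≥0 → ℝ) :
    (⨅ (ε : ℝ) (_ : 0 < ε) (K : Set ℝ≥0) (_ : IsCompact K),
      Filter.principal {g | ∀ t ∈ K, |f t - g t| < ε}) ≤
    ⨅ (ε : ℝ) (_ : 0 < ε) (T : Finset ℝ≥0), Filter.principal (stickyNhdSet f ε T) := by
  refine le_iInf fun ε => le_iInf fun hε => le_iInf fun T => ?_
  set M : ℝ≥0 := T.sup id + 1
  set K : Set ℝ≥0 := Set.Icc 0 M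
  have hK : IsCompact K := isCompact_Icc
  have hsub : {g | ∀ t ∈ K, |f t - g t| < ε} ⊆ stickyNhdSet f ε T := by
    intro g hg
    refine ⟨1, one_pos, fun t ht => ?_⟩
    obtain ⟨t', ht', habs⟩ := ht
    refine hg t ⟨zero_le, ?_⟩
    have h1 : (t : ℝ) < (t' : ℝ) + 1 := by
      have := abs_lt.1 habs
      linarith [this.2]
    have h2' : t' ≤ T.sup id := Finset.le_sup (f := id) ht'
    have h2 : (t' : ℝ) ≤ ((T.sup id : ℝ≥0) : ℝ) := by exact_mod_cast h2'
    have : (t : ℝ) ≤ (M : ℝ) := by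
      simp only [M, NNReal.coe_add, NNReal.coe_one]
      linarith
    exact_mod_cast this
  calc (⨅ (ε : ℝ) (_ : 0 < ε) (K : Set ℝ≥0) (_ : IsCompact K),
      Filter.principal {g | ∀ t ∈ K, |f t - g t| < ε})
      ≤ Filter.principal {g | ∀ t ∈ K, |f t - g t| < ε} := by
        refine iInf_le_of_le ε (iInf_le_of_le hε (iInf_le_of_le K (iInf_le_of_le hK le_rfl)))
    _ ≤ Filter.principal (stickyNhdSet f ε T) := Filter.principal_mono.2 hsub

theorem sticky_coarser_than_locally_uniform :
    ∀ U : Set (ℝ≥0 → ℝ), IsOpen[stickyTop] U → IsOpen[locUnifTop] U := by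
  intro U hU f hf
  exact locUnif_le_sticky f (hU f hf)
end

section
/- The sticking topology on ℝ^[0,∞) is Hausdorff. -/
open scoped NNReal
open Filter Topology

/-- Any "pointwise ball" at a single time `t` is open in the sticking topology. -/
lemma sticky_ball_open (t : ℝ≥0) (c ε : ℝ) :
    IsOpen[stickyTop] {h : ℝ≥0 → ℝ | |h t - c| < ε} := by
  intro h hh
  have hδ : 0 < ε - |h t - c| := by simpa using hh
  refine mem_of_superset
    (mem_iInf_of_mem (ε - |h t - c|) (mem_iInf_of_mem hδ
      (mem_iInf_of_mem {t} (mem_principal_self _)))) ?_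
  rintro g ⟨η, hη, hg⟩
  have h1 : |h t - g t| < ε - |h t - c| := by
    refine hg t ⟨t, Finset.mem_singleton_self t, ?_⟩
    simpa using hη
  have : |g t - c| ≤ |g t - h t| + |h t - c| := abs_sub_le _ _ _
  rw [abs_sub_comm (g t) (h t)] at this
  simp only [Set.mem_setOf_eq]
  linarith

theorem sticky_t2 : @T2Space (ℝ≥0 → ℝ) stickyTop := by
  letI := stickyTop
  constructor
  intro f g hfg
  obtain ⟨t, ht⟩ : ∃ t, f t ≠ g t := Function.ne_iff.mp hfg
  set ε := |f t - g t| / 2 with hεdef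
  have hε0 : 0 < ε := by
    have : 0 < |f t - g t| := abs_pos.mpr (sub_ne_zero.mpr ht)
    linarith
  refine ⟨{h | |h t - f t| < ε}, {h | |h t - g t| < ε},
    sticky_ball_open t (f t) ε, sticky_ball_open t (g t) ε, by simp [hε0], by simp [hε0], ?_⟩
  rw [Set.disjoint_left]
  rintro h h1 h2
  simp only [Set.mem_setOf_eq] at h1 h2
  have : |f t - g t| ≤ |f t - h t| + |h t - g t| := abs_sub_le _ _ _
  have e1 : |f t - h t| = |h t - f t| := abs_sub_comm _ _
  linarith
end

section
/- If a net (f_α) of continuous functions from [0,∞) to ℝ converges pointwise to a continuous function f, then f_α converges to f in the sticking topology; hence on the space of continuous functions the sticking topology coincides with the topology of pointwise convergence. -/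
open scoped NNReal
open Filter Topology

/-- The sticky neighbourhood filter. -/
def stickyF (f : ℝ≥0 → ℝ) : Filter (ℝ≥0 → ℝ) :=
  ⨅ (ε : ℝ) (_ : 0 < ε) (T : Finset ℝ≥0), Filter.principal (stickyNhdSet f ε T)

lemma stickyNhdSet_mono {f : ℝ≥0 → ℝ} {ε ε' : ℝ} (hε : ε ≤ ε') {T T' : Finset ℝ≥0}
    (hT : T' ⊆ T) : stickyNhdSet f ε T ⊆ stickyNhdSet f ε' T' := by
  rintro g ⟨η, hη, hg⟩
  exact ⟨η, hη, fun t ⟨t', ht', hd⟩ => (hg t ⟨t', hT ht', hd⟩).trans_le hε⟩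

lemma stickyF_eq (f : ℝ≥0 → ℝ) :
    stickyF f = ⨅ p : {ε : ℝ // 0 < ε} × Finset ℝ≥0, 𝓟 (stickyNhdSet f p.1.1 p.2) := by
  refine le_antisymm (le_iInf fun p => ?_) (le_iInf fun ε => le_iInf fun hε => le_iInf fun T =>
    iInf_le _ (⟨⟨ε, hε⟩, T⟩ : {ε : ℝ // 0 < ε} × Finset ℝ≥0))
  exact iInf_le_of_le p.1.1 (iInf_le_of_le p.1.2 (iInf_le _ p.2))

lemma mem_stickyF {f : ℝ≥0 → ℝ} {U : Set (ℝ≥0 → ℝ)} :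
    U ∈ stickyF f ↔ ∃ ε > (0:ℝ), ∃ T : Finset ℝ≥0, stickyNhdSet f ε T ⊆ U := by
  constructor
  · intro hU
    rw [stickyF_eq] at hU
    have hdir : Directed (· ≥ ·)
        (fun p : {ε : ℝ // 0 < ε} × Finset ℝ≥0 => 𝓟 (stickyNhdSet f p.1.1 p.2)) := by
      rintro ⟨⟨ε₁, h₁⟩, T₁⟩ ⟨⟨ε₂, h₂⟩, T₂⟩
      refine ⟨⟨⟨min ε₁ ε₂, lt_min h₁ h₂⟩, T₁ ∪ T₂⟩, ?_, ?_⟩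
      · exact principal_mono.2 (stickyNhdSet_mono (min_le_left _ _) Finset.subset_union_left)
      · exact principal_mono.2 (stickyNhdSet_mono (min_le_right _ _) Finset.subset_union_right)
    haveI : Nonempty ({ε : ℝ // 0 < ε} × Finset ℝ≥0) := ⟨⟨⟨1, one_pos⟩, ∅⟩⟩
    obtain ⟨⟨⟨ε, hε⟩, T⟩, h⟩ := (Filter.mem_iInf_of_directed hdir U).1 hU
    exact ⟨ε, hε, T, mem_principal.1 h⟩
  · rintro ⟨ε, hε, T, hsub⟩
    exact mem_iInf_of_mem ε (mem_iInf_of_mem hε (mem_iInf_of_mem T (mem_principal.2 hsub)))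

/-- Key analytic lemma: for continuous `f, g`, pointwise `ε/2`-closeness on a finite set
spreads to `ε`-closeness on a neighbourhood of that set. -/
lemma key {f g : ℝ≥0 → ℝ} (hf : Continuous f) (hg : Continuous g) {ε : ℝ} (hε : 0 < ε)
    (T : Finset ℝ≥0) (h : ∀ t' ∈ T, |f t' - g t'| < ε / 2) : g ∈ stickyNhdSet f ε T := by
  have hS : IsOpen {t : ℝ≥0 | |f t - g t| < ε} :=
    isOpen_lt ((hf.sub hg).abs) continuous_const
  have hTS : (T : Set ℝ≥0) ⊆ {t : ℝ≥0 | |f t - g t| < ε} := fun t ht =>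
    lt_trans (h t ht) (by linarith)
  obtain ⟨δ, hδ, hsub⟩ := T.finite_toSet.isCompact.exists_thickening_subset_open hS hTS
  refine ⟨δ, hδ, fun t ⟨t', ht', hlt⟩ => hsub ?_⟩
  exact Metric.mem_thickening_iff.2 ⟨t', ht', by rwa [NNReal.dist_eq]⟩

theorem pointwise_to_sticky_on_continuous {ι : Type*} (l : Filter ι) (F : ι → ℝ≥0 → ℝ)
    (hF : ∀ i, Continuous (F i)) (f : ℝ≥0 → ℝ) (hf : Continuous f)
    (hpt : ∀ t : ℝ≥0, Filter.Tendsto (fun i => F i t) l (nhds (f t))) :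
    Filter.Tendsto F l (@nhds (ℝ≥0 → ℝ) stickyTop f) ∧
    TopologicalSpace.induced (Subtype.val : {g : ℝ≥0 → ℝ // Continuous g} → (ℝ≥0 → ℝ)) stickyTop
      = TopologicalSpace.induced Subtype.val (Pi.topologicalSpace : TopologicalSpace (ℝ≥0 → ℝ)) := by
  classical
  -- open sets of `stickyTop` are sticky neighbourhoods of each of their points
  have hopen : ∀ U : Set (ℝ≥0 → ℝ), IsOpen[stickyTop] U ↔ ∀ g ∈ U, U ∈ stickyF g :=
    fun U => Iff.rfl
  -- the sticky filter is finer than the sticky neighbourhood filter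
  have hnle : ∀ g : ℝ≥0 → ℝ, stickyF g ≤ @nhds _ stickyTop g := by
    intro g
    rw [@nhds_def _ stickyTop]
    refine le_iInf fun s => le_iInf fun hs => le_principal_iff.2 ?_
    exact (hopen s).1 hs.2 g hs.1
  constructor
  · -- pointwise convergence implies sticky convergence
    refine (Filter.tendsto_iInf.2 fun ε => Filter.tendsto_iInf.2 fun hε =>
      Filter.tendsto_iInf.2 fun T => Filter.tendsto_principal.2 ?_ :
        Filter.Tendsto F l (stickyF f)).mono_right (hnle f)
    have hev : ∀ᶠ i in l, ∀ t' ∈ T, |f t' - F i t'| < ε / 2 := by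
      rw [Filter.eventually_all_finset]
      intro t' _
      have := Metric.tendsto_nhds.1 (hpt t') (ε / 2) (by linarith)
      filter_upwards [this] with i hi
      rwa [Real.dist_eq, abs_sub_comm] at hi
    filter_upwards [hev] with i hi
    exact key hf (hF i) hε T hi
  · refine le_antisymm ?_ ?_
    · -- sticky ≤ pointwise globally, hence on the subtype
      refine induced_mono ?_
      rw [TopologicalSpace.le_def]
      intro U hU
      rw [hopen]
      intro g hg
      rw [mem_stickyF]
      have hUmem : U ∈ nhds g := hU.mem_nhds hg
      rw [nhds_pi, Filter.mem_pi] at hUmem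
      obtain ⟨I, hIfin, V, hV, hsub⟩ := hUmem
      choose εf hεf hball using fun i => Metric.mem_nhds_iff.1 (hV i)
      set T : Finset ℝ≥0 := hIfin.toFinset with hT
      rcases T.eq_empty_or_nonempty with hTe | hTne
      · refine ⟨1, one_pos, ∅, fun h _ => hsub fun i hi => ?_⟩
        exact absurd (hIfin.mem_toFinset.2 hi) (by rw [← hT, hTe]; simp)
      · refine ⟨T.inf' hTne εf, (Finset.lt_inf'_iff _).2 fun i _ => hεf i, T, ?_⟩
        rintro h ⟨η, hη, hh⟩
        refine hsub fun i hi => ?_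
        have hiT : i ∈ T := hIfin.mem_toFinset.2 hi
        have h1 : |g i - h i| < T.inf' hTne εf := hh i ⟨i, hiT, by simpa using hη⟩
        have h2 : |g i - h i| < εf i := h1.trans_le (Finset.inf'_le _ hiT)
        exact hball i (by rw [Metric.mem_ball, Real.dist_eq, abs_sub_comm]; exact h2)
    · -- pointwise ≤ sticky on the subtype of continuous functions
      rw [TopologicalSpace.le_def]
      intro U' hU'
      obtain ⟨U, hU, rfl⟩ := (@isOpen_induced_iff _ _ stickyTop _ _).1 hU'
      have hsel : ∀ g ∈ U, ∃ ε > (0:ℝ), ∃ T : Finset ℝ≥0, stickyNhdSet g ε T ⊆ U :=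
        fun g hg => mem_stickyF.1 ((hopen U).1 hU g hg)
      choose! ε hεpos T hTsub using hsel
      set W : Set (ℝ≥0 → ℝ) :=
        ⋃ (g : ℝ≥0 → ℝ) (_ : g ∈ U) (_ : Continuous g),
          {h : ℝ≥0 → ℝ | ∀ t ∈ T g, |g t - h t| < ε g / 2} with hW
      have hWopen : IsOpen W := by
        refine isOpen_iUnion fun g => isOpen_iUnion fun hg => isOpen_iUnion fun hgc => ?_
        have : {h : ℝ≥0 → ℝ | ∀ t ∈ T g, |g t - h t| < ε g / 2}
            = ⋂ t ∈ T g, (fun h : ℝ≥0 → ℝ => h t) ⁻¹' {y : ℝ | |g t - y| < ε g / 2} := by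
          ext h; simp
        rw [this]
        refine isOpen_biInter_finset fun t _ => ?_
        exact (isOpen_lt ((continuous_const.sub continuous_id).abs) continuous_const).preimage
          (continuous_apply t)
      refine isOpen_induced_iff.2 ⟨W, hWopen, ?_⟩
      ext ⟨g, hgc⟩
      simp only [Set.mem_preimage]
      constructor
      · rintro hgW
        simp only [hW, Set.mem_iUnion] at hgW
        obtain ⟨g', hg', hg'c, hmem⟩ := hgW
        exact hTsub g' hg' (key hg'c hgc (hεpos g' hg') (T g') hmem)
      · intro hg
        simp only [hW, Set.mem_iUnion]
        exact ⟨g, hg, hgc, fun t _ => by simpa using half_pos (hεpos g hg)⟩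
end

section
/- Let (t_k) be a sequence in [0,∞) converging to t. The functional S_τ(f) = limsup_k f(t_k), with values in the extended reals, is continuous on ℝ^[0,∞) for the sticking topology. -/
open scoped NNReal
open Filter Topology

-- auxiliary: neighbourhoods in EReal
lemma ereal_nhds_aux (L : EReal) (U : Set EReal) (hU : U ∈ nhds L) :
    ∃ ε : ℝ, 0 < ε ∧ ∀ x : EReal, x ≤ L + (ε : EReal) → L ≤ x + (ε : EReal) → x ∈ U := by
  induction L using EReal.rec with
  | bot =>
    refine ⟨1, one_pos, fun x hx _ => ?_⟩
    have : x = ⊥ := by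
      rw [EReal.bot_add] at hx
      exact le_bot_iff.1 hx
    exact this ▸ mem_of_mem_nhds hU
  | top =>
    refine ⟨1, one_pos, fun x _ hx => ?_⟩
    have hxt : x + (1 : EReal) = ⊤ := top_le_iff.1 hx
    have : x = ⊤ := by
      by_contra hne
      induction x using EReal.rec with
      | bot => rw [EReal.bot_add] at hxt; exact absurd hxt (by simp)
      | coe r => simp [← EReal.coe_one, ← EReal.coe_add] at hxt
      | top => exact hne rfl
    exact this ▸ mem_of_mem_nhds hU
  | coe r =>
    obtain ⟨l, u, ⟨hl, hu⟩, hsub⟩ :=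
      (mem_nhds_iff_exists_Ioo_subset' ⟨⊥, EReal.bot_lt_coe r⟩ ⟨⊤, EReal.coe_lt_top r⟩).1 hU
    obtain ⟨a, hla, har⟩ := EReal.exists_between_coe_real hl
    obtain ⟨b, hrb, hbu⟩ := EReal.exists_between_coe_real hu
    have har' : a < r := by exact_mod_cast har
    have hrb' : r < b := by exact_mod_cast hrb
    refine ⟨min (r - a) (b - r) / 2, half_pos (lt_min (by linarith) (by linarith)), fun x hx1 hx2 => ?_⟩
    set ε := min (r - a) (b - r) / 2 with hεdef
    have hε1 : ε < r - a := by
      have : min (r - a) (b - r) ≤ r - a := min_le_left _ _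
      have h2 : (0:ℝ) < min (r - a) (b - r) := lt_min (by linarith) (by linarith)
      linarith
    have hε2 : ε < b - r := by
      have : min (r - a) (b - r) ≤ b - r := min_le_right _ _
      have h2 : (0:ℝ) < min (r - a) (b - r) := lt_min (by linarith) (by linarith)
      linarith
    induction x using EReal.rec with
    | bot =>
      exfalso
      rw [EReal.bot_add] at hx2
      exact absurd (le_bot_iff.1 hx2) (by simp)
    | top =>
      exfalso
      rw [← EReal.coe_add] at hx1
      exact absurd (top_le_iff.1 hx1) (EReal.coe_ne_top _)
    | coe y =>
      rw [← EReal.coe_add, EReal.coe_le_coe_iff] at hx1 hx2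
      apply hsub
      constructor
      · exact lt_of_lt_of_le hla (by exact_mod_cast (by linarith : a ≤ y))
      · exact lt_of_le_of_lt (by exact_mod_cast (by linarith : y ≤ b)) hbu

-- auxiliary: limsup comparison
lemma limsup_le_aux (u v : ℕ → ℝ) (ε : ℝ) (hε : 0 < ε)
    (h : ∀ᶠ k in atTop, v k ≤ u k + ε) :
    Filter.limsup (fun k => ((v k : ℝ) : EReal)) Filter.atTop ≤
      Filter.limsup (fun k => ((u k : ℝ) : EReal)) Filter.atTop + (ε : EReal) := by
  have h1 : Filter.limsup (fun k => ((v k : ℝ) : EReal)) Filter.atTop ≤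
      Filter.limsup ((fun k => ((u k : ℝ) : EReal)) + (fun _ => (ε : EReal))) Filter.atTop := by
    apply Filter.limsup_le_limsup ?_ (by isBoundedDefault) (by isBoundedDefault)
    filter_upwards [h] with k hk
    show ((v k : ℝ) : EReal) ≤ ((u k : ℝ) : EReal) + (ε : EReal)
    rw [← EReal.coe_add]
    exact_mod_cast hk
  refine h1.trans ?_
  have h2 := EReal.limsup_add_le (u := fun k => ((u k : ℝ) : EReal))
      (v := fun _ => (ε : EReal)) (f := Filter.atTop)
      (Or.inr (by rw [Filter.limsup_const]; simp)) (Or.inr (by rw [Filter.limsup_const]; simp))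
  rw [Filter.limsup_const] at h2
  exact h2

theorem limsup_along_seq_continuous_sticky (τ : ℕ → ℝ≥0) (t : ℝ≥0)
    (hτ : Filter.Tendsto τ Filter.atTop (nhds t)) :
    @Continuous (ℝ≥0 → ℝ) EReal stickyTop _
      (fun f => Filter.limsup (fun k => ((f (τ k) : ℝ) : EReal)) Filter.atTop) := by
  rw [continuous_def]
  intro U hU
  intro f hf
  obtain ⟨ε, hε, hIcc⟩ := ereal_nhds_aux _ U (hU.mem_nhds hf)
  apply Filter.mem_iInf_of_mem ε
  apply Filter.mem_iInf_of_mem hε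
  apply Filter.mem_iInf_of_mem {t}
  rw [Filter.mem_principal]
  rintro g ⟨η, hη, hg⟩
  -- eventually τ k is within η of t
  have hc : Filter.Tendsto (fun k => ((τ k : ℝ))) Filter.atTop (nhds (t : ℝ)) :=
    NNReal.tendsto_coe.2 hτ
  have hev : ∀ᶠ k in Filter.atTop, |((τ k : ℝ)) - (t : ℝ)| < η := by
    have := Metric.tendsto_nhds.1 hc η hη
    filter_upwards [this] with k hk
    rwa [Real.dist_eq] at hk
  have hfg : ∀ᶠ k in Filter.atTop, |f (τ k) - g (τ k)| < ε := by
    filter_upwards [hev] with k hk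
    exact hg (τ k) ⟨t, Finset.mem_singleton_self t, hk⟩
  apply hIcc
  · exact limsup_le_aux (fun k => f (τ k)) (fun k => g (τ k)) ε hε (by filter_upwards [hfg] with k hk; cases abs_lt.1 hk; linarith)
  · exact limsup_le_aux (fun k => g (τ k)) (fun k => f (τ k)) ε hε (by filter_upwards [hfg] with k hk; cases abs_lt.1 hk; linarith)
end

section
/- Let (f_n) and (g_n) be sequences of functions from [0,∞) to ℝ with each f_n continuous, such that g_n converges locally uniformly to a continuous function g_∞ and limsup_n {t : f_n(t) ≠ g_n(t)} = ∅ (i.e. every t belongs to at most finitely many of the sets {f_n ≠ g_n}), with each g_n continuous. Then f_n converges to g_∞ in the sticking topology. -/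
open scoped NNReal
open Filter Topology

theorem sticky_of_eventually_eq_locUnif (f g : ℕ → ℝ≥0 → ℝ) (g_inf : ℝ≥0 → ℝ)
    (hf : ∀ n, Continuous (f n)) (hg : ∀ n, Continuous (g n)) (hginf : Continuous g_inf)
    (hloc : TendstoLocallyUniformly g g_inf Filter.atTop)
    (hfin : ∀ t : ℝ≥0, {n : ℕ | f n t ≠ g n t}.Finite) :
    ∀ t : ℝ≥0, ∀ ε > (0:ℝ), ∃ N : ℕ, ∀ n ≥ N, ∃ V ∈ nhds t, ∀ s ∈ V,
      |f n s - g_inf s| < ε := by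
  intro t ε hε
  have hpt : Tendsto (fun n => g n t) atTop (𝓝 (g_inf t)) := (hloc.tendstoLocallyUniformlyOn (s := Set.univ)).tendsto_at (Set.mem_univ t)
  have h1 : ∀ᶠ n in atTop, |g n t - g_inf t| < ε := by
    have := (Metric.tendsto_atTop.mp hpt) ε hε
    simpa [Real.dist_eq] using this
  have h2 : ∀ᶠ n in atTop, f n t = g n t := by
    rcases (hfin t).bddAbove with ⟨M, hM⟩
    filter_upwards [eventually_gt_atTop M] with n hn
    by_contra h
    exact absurd (hM h) (not_le.mpr hn)
  rcases eventually_atTop.mp (h1.and h2) with ⟨N, hN⟩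
  refine ⟨N, fun n hn => ?_⟩
  obtain ⟨hlt, heq⟩ := hN n hn
  have hft : |f n t - g_inf t| < ε := by rw [heq]; exact hlt
  have hcont : Continuous fun s => |f n s - g_inf s| :=
    ((hf n).sub hginf).abs
  have hopen : IsOpen {s : ℝ≥0 | |f n s - g_inf s| < ε} :=
    isOpen_lt hcont continuous_const
  exact ⟨_, hopen.mem_nhds hft, fun s hs => hs⟩
end

section
/- Let (f_n) and (g_n) be sequences of functions from [0,∞) to ℝ (no continuity assumed on f_n), with each g_n continuous, g_n converging locally uniformly to g_∞, and suppose limsup_n closure({f_n ≠ g_n}) = ∅, i.e. every t has a neighbourhood meeting only finitely many of the sets {f_n ≠ g_n}. Then f_n converges to g_∞ in the sticking topology. -/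
open scoped NNReal
open Filter Topology

theorem sticky_of_eventually_eq_locUnif_closure (f g : ℕ → ℝ≥0 → ℝ) (g_inf : ℝ≥0 → ℝ)
    (hg : ∀ n, Continuous (g n)) (hginf : Continuous g_inf)
    (hloc : TendstoLocallyUniformly g g_inf Filter.atTop)
    (hfin : ∀ t : ℝ≥0, ∃ V ∈ nhds t, {n : ℕ | ∃ s ∈ V, f n s ≠ g n s}.Finite) :
    ∀ t : ℝ≥0, ∀ ε > (0:ℝ), ∃ N : ℕ, ∀ n ≥ N, ∃ V ∈ nhds t, ∀ s ∈ V,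
      |f n s - g_inf s| < ε := by
  intro t ε hε
  obtain ⟨V, hV, hVfin⟩ := hfin t
  rw [Metric.tendstoLocallyUniformly_iff] at hloc
  obtain ⟨U, hU, hUn⟩ := hloc ε hε t
  rw [eventually_atTop] at hUn
  obtain ⟨N1, hN1⟩ := hUn
  obtain ⟨N2, hN2⟩ := hVfin.bddAbove
  refine ⟨max N1 (N2 + 1), fun n hn => ⟨V ∩ U, Filter.inter_mem hV hU, fun s hs => ?_⟩⟩
  have hfg : f n s = g n s := by
    by_contra h
    have : n ∈ {n : ℕ | ∃ s ∈ V, f n s ≠ g n s} := ⟨s, hs.1, h⟩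
    have := hN2 this
    omega
  have := hN1 n (le_trans (le_max_left _ _) hn) s hs.2
  rw [hfg, abs_sub_comm]
  simpa [Real.dist_eq] using this
end

section
/- Let ξ : [0,∞) → ℝ be continuous with ξ(0) = 0 and ξ(t) → 0 as t → ∞. Then the sequence f_n(t) = ξ(nt) converges to the zero function in the sticking topology, i.e. for every t ≥ 0 and ε > 0 there exists N such that for all n ≥ N there is a neighbourhood V_t of t with |ξ(ns)| < ε for all s ∈ V_t. -/
open scoped NNReal
open Filter Topology

theorem gliding_hump_sticky_to_zero (ξ : ℝ≥0 → ℝ) (hc : Continuous ξ) (h0 : ξ 0 = 0)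
    (hinf : Filter.Tendsto ξ Filter.atTop (nhds 0)) :
    ∀ t : ℝ≥0, ∀ ε > (0:ℝ), ∃ N : ℕ, ∀ n ≥ N, ∃ V ∈ nhds t, ∀ s ∈ V,
      |ξ ((n : ℝ≥0) * s)| < ε := by
  intro t ε hε
  rcases eq_or_lt_of_le (zero_le : (0:ℝ≥0) ≤ t) with h | ht
  · -- t = 0 : any n works by continuity at 0
    refine ⟨0, fun n _ => ?_⟩
    have hcont : Continuous fun s : ℝ≥0 => ξ ((n : ℝ≥0) * s) :=
      hc.comp (continuous_const.mul continuous_id)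
    have hopen : IsOpen {s : ℝ≥0 | |ξ ((n : ℝ≥0) * s)| < ε} :=
      isOpen_lt (continuous_abs.comp hcont) continuous_const
    refine ⟨_, hopen.mem_nhds ?_, fun s hs => hs⟩
    simp only [Set.mem_setOf_eq, ← h, mul_zero, h0, abs_zero]
    exact hε
  · -- t > 0 : use the tail bound
    have hev : ∀ᶠ x in atTop, |ξ x| < ε := by
      have := Metric.tendsto_nhds.mp hinf ε hε
      simpa [Real.dist_eq] using this
    obtain ⟨M, hM⟩ := eventually_atTop.mp hev
    obtain ⟨N, hN⟩ := exists_nat_gt (M / t)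
    refine ⟨N, fun n hn => ?_⟩
    have hNt : M < (N : ℝ≥0) * t := by
      rw [← div_lt_iff₀ ht]
      exact hN
    have hnt : M < (n : ℝ≥0) * t :=
      lt_of_lt_of_le hNt (mul_le_mul_left (by exact_mod_cast hn) t)
    have hopen : IsOpen {s : ℝ≥0 | M < (n : ℝ≥0) * s} :=
      isOpen_lt continuous_const (continuous_const.mul continuous_id)
    exact ⟨_, hopen.mem_nhds hnt, fun s hs => hM _ (le_of_lt hs)⟩
end

section
/- Let η : [0,∞) → ℝ be continuous, let ξ_k : ℝ → ℝ be continuous with ξ_k(0) = 0, ξ_k(t) → 0 at ±∞, and |ξ_k| ≤ 1 for all k, let (t_k) be points in [0,∞), and let (α_k) satisfy Σ_k |α_k| < ∞. Then η_n(t) = η(t) + Σ_k α_k ξ_k(n(t − t_k)) converges to η in the sticking topology as n → ∞. -/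
set_option maxHeartbeats 1000000


open scoped NNReal
open Filter Topology

lemma key_single (ξ : ℝ → ℝ) (hc : Continuous ξ) (h0 : ξ 0 = 0)
    (htop : Filter.Tendsto ξ Filter.atTop (nhds 0))
    (hbot : Filter.Tendsto ξ Filter.atBot (nhds 0))
    (t c : ℝ≥0) (δ : ℝ) (hδ : 0 < δ) :
    ∃ N : ℕ, ∀ n ≥ N, ∀ᶠ s : ℝ≥0 in 𝓝 t, |ξ ((n:ℝ) * ((s:ℝ) - (c:ℝ)))| < δ := by
  by_cases h : (t:ℝ) = (c:ℝ)
  · refine ⟨0, fun n _ => ?_⟩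
    have hg : Continuous fun s : ℝ≥0 => ξ ((n:ℝ) * ((s:ℝ) - (c:ℝ))) :=
      hc.comp (by continuity)
    have hgt : ξ ((n:ℝ) * ((t:ℝ) - (c:ℝ))) = 0 := by
      rw [h]; simp [h0]
    have hca := hg.continuousAt (x := t)
    rw [ContinuousAt] at hca
    simp only [hgt] at hca
    have hmem : {x : ℝ | |x| < δ} ∈ 𝓝 (0:ℝ) := by
      have ho : IsOpen {x : ℝ | |x| < δ} := isOpen_lt continuous_abs continuous_const
      exact ho.mem_nhds (by simpa using hδ)
    filter_upwards [hca hmem] with s hs using hs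
  · set c' := |(t:ℝ) - (c:ℝ)| with hc'
    have hc'pos : 0 < c' := abs_pos.mpr (sub_ne_zero.mpr h)
    have hAe : ∀ᶠ x in atTop, |ξ x| < δ := by
      have := Metric.tendsto_nhds.mp htop δ hδ
      simpa [Real.dist_eq] using this
    have hBe : ∀ᶠ x in atBot, |ξ x| < δ := by
      have := Metric.tendsto_nhds.mp hbot δ hδ
      simpa [Real.dist_eq] using this
    obtain ⟨A, hA⟩ := eventually_atTop.mp hAe
    obtain ⟨B, hB⟩ := eventually_atBot.mp hBe
    set M : ℝ := max (max A (-B)) 0 with hM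
    have hM0 : 0 ≤ M := le_max_right _ _
    have hMA : A ≤ M := le_trans (le_max_left _ _) (le_max_left _ _)
    have hMB : -B ≤ M := le_trans (le_max_right _ _) (le_max_left _ _)
    refine ⟨⌈2 * M / c'⌉₊ + 1, fun n hn => ?_⟩
    have hnc : (2 * M / c' : ℝ) ≤ (n : ℝ) := by
      calc (2 * M / c' : ℝ) ≤ (⌈2 * M / c'⌉₊ : ℝ) := Nat.le_ceil _
        _ ≤ (n : ℝ) := by exact_mod_cast le_trans (Nat.le_succ _) hn
    have hnM : M ≤ (n : ℝ) * c' / 2 := by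
      rw [div_le_iff₀ hc'pos] at hnc
      linarith
    have hn0 : (0:ℝ) ≤ (n:ℝ) := Nat.cast_nonneg n
    filter_upwards [Metric.ball_mem_nhds t (half_pos hc'pos)] with s hs
    have hdist : |(s:ℝ) - (t:ℝ)| < c' / 2 := by
      rw [Metric.mem_ball, NNReal.dist_eq] at hs
      exact hs
    rw [abs_lt] at hdist
    rcases lt_or_gt_of_ne h with hlt | hgt
    · -- t < c, so c' = c - t, and s - c < -c'/2
      have hc'eq : c' = (c:ℝ) - (t:ℝ) := by
        rw [hc', abs_of_neg (by linarith)]; ring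
      have hsc : (s:ℝ) - (c:ℝ) < -(c'/2) := by linarith [hdist.2]
      have hle : (n:ℝ) * ((s:ℝ) - (c:ℝ)) ≤ B := by
        have h1 : (n:ℝ) * ((s:ℝ) - (c:ℝ)) ≤ (n:ℝ) * (-(c'/2)) := by
          apply mul_le_mul_of_nonneg_left (le_of_lt hsc) hn0
        have h2 : (n:ℝ) * (-(c'/2)) = -((n:ℝ) * c' / 2) := by ring
        linarith
      exact hB _ hle
    · -- t > c, so c' = t - c, and s - c > c'/2
      have hc'eq : c' = (t:ℝ) - (c:ℝ) := by
        rw [hc', abs_of_pos (by linarith)]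
      have hsc : c'/2 < (s:ℝ) - (c:ℝ) := by linarith [hdist.1]
      have hge : A ≤ (n:ℝ) * ((s:ℝ) - (c:ℝ)) := by
        have h1 : (n:ℝ) * (c'/2) ≤ (n:ℝ) * ((s:ℝ) - (c:ℝ)) :=
          mul_le_mul_of_nonneg_left (le_of_lt hsc) hn0
        have h2 : (n:ℝ) * (c'/2) = (n:ℝ) * c' / 2 := by ring
        linarith
      exact hA _ hge

theorem perturbed_signal_sticky (η : ℝ≥0 → ℝ) (hη : Continuous η) (ξ : ℕ → ℝ → ℝ)
    (hξc : ∀ k, Continuous (ξ k)) (hξ0 : ∀ k, ξ k 0 = 0)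
    (hξtop : ∀ k, Filter.Tendsto (ξ k) Filter.atTop (nhds 0))
    (hξbot : ∀ k, Filter.Tendsto (ξ k) Filter.atBot (nhds 0))
    (hξb : ∀ k t, |ξ k t| ≤ 1) (tk : ℕ → ℝ≥0) (α : ℕ → ℝ)
    (hα : Summable fun k => |α k|) :
    ∀ t : ℝ≥0, ∀ ε > (0:ℝ), ∃ N : ℕ, ∀ n ≥ N, ∃ V ∈ nhds t, ∀ s ∈ V,
      |(η s + ∑' k, α k * ξ k ((n : ℝ) * ((s : ℝ) - (tk k : ℝ)))) - η s| < ε := by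
  intro t ε hε
  -- choose K with small tail and K ≥ 1
  have htail : Filter.Tendsto (fun K => ∑' k, |α (k + K)|) atTop (𝓝 0) :=
    tendsto_sum_nat_add fun k => |α k|
  have hev : ∀ᶠ K in atTop, (∑' k, |α (k + K)|) < ε / 2 := by
    have := Metric.tendsto_nhds.mp htail (ε/2) (by linarith)
    filter_upwards [this] with K hK
    rw [Real.dist_eq, sub_zero] at hK
    exact lt_of_le_of_lt (le_abs_self _) hK
  obtain ⟨K, hK1, hKtail⟩ := (hev.and (eventually_ge_atTop 1)).exists
  -- per-index tolerances
  set δk : ℕ → ℝ := fun k => (ε / (2 * K)) / (|α k| + 1) with hδk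
  have hεK : 0 < ε / (2 * K) := by
    apply div_pos hε
    positivity
  have hδkpos : ∀ k, 0 < δk k := fun k => div_pos hεK (by positivity)
  have hall : ∀ k : ℕ, ∃ N : ℕ, ∀ n ≥ N, ∀ᶠ s : ℝ≥0 in 𝓝 t,
      |ξ k ((n:ℝ) * ((s:ℝ) - (tk k : ℝ)))| < δk k :=
    fun k => key_single (ξ k) (hξc k) (hξ0 k) (hξtop k) (hξbot k) t (tk k) (δk k) (hδkpos k)
  choose Nf hNf using hall
  refine ⟨(Finset.range K).sup Nf, fun n hn => ?_⟩
  have hevs : ∀ᶠ s : ℝ≥0 in 𝓝 t, ∀ k ∈ Finset.range K,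
      |ξ k ((n:ℝ) * ((s:ℝ) - (tk k : ℝ)))| < δk k :=
    (Finset.range K).eventually_all.mpr
      (fun k hk => hNf k n (le_trans (Finset.le_sup hk) hn))
  obtain ⟨V, hV, hVs⟩ := hevs.exists_mem
  refine ⟨V, hV, fun s hs => ?_⟩
  have hsk := hVs s hs
  rw [add_sub_cancel_left]
  set f : ℕ → ℝ := fun k => α k * ξ k ((n:ℝ) * ((s:ℝ) - (tk k : ℝ))) with hf
  have hfle : ∀ k, |f k| ≤ |α k| := by
    intro k
    rw [hf, abs_mul]
    calc |α k| * |ξ k ((n:ℝ) * ((s:ℝ) - (tk k : ℝ)))| ≤ |α k| * 1 :=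
          mul_le_mul_of_nonneg_left (hξb k _) (abs_nonneg _)
      _ = |α k| := mul_one _
  have hfsum : Summable fun k => |f k| :=
    Summable.of_nonneg_of_le (fun k => abs_nonneg _) hfle hα
  have habs : |∑' k, f k| ≤ ∑' k, |f k| := by
    have := norm_tsum_le_tsum_norm (f := f) (by simpa [Real.norm_eq_abs] using hfsum)
    simpa [Real.norm_eq_abs] using this
  have hsplit : (∑ k ∈ Finset.range K, |f k|) + ∑' k, |f (k + K)| = ∑' k, |f k| :=
    Summable.sum_add_tsum_nat_add K hfsum
  have hhead : (∑ k ∈ Finset.range K, |f k|) < ε / 2 := by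
    have hbd : ∀ k ∈ Finset.range K, |f k| < ε / (2 * K) := by
      intro k hk
      have h1 : |f k| ≤ |α k| * δk k := by
        rw [hf, abs_mul]
        exact mul_le_mul_of_nonneg_left (le_of_lt (hsk k hk)) (abs_nonneg _)
      have h2 : |α k| * δk k < (|α k| + 1) * δk k := by
        have := hδkpos k
        nlinarith
      have h3 : (|α k| + 1) * δk k = ε / (2 * K) := by
        rw [hδk]
        field_simp
      linarith
    have hne : (Finset.range K).Nonempty := by
      rw [Finset.nonempty_range_iff]
      omega
    have hlt := Finset.sum_lt_sum_of_nonempty hne hbd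
    have hsc : (∑ _k ∈ Finset.range K, ε / (2 * K)) = (K : ℝ) * (ε / (2 * K)) := by
      rw [Finset.sum_const, Finset.card_range, nsmul_eq_mul]
    have hK0 : (K : ℝ) ≠ 0 := by
      exact_mod_cast Nat.cast_ne_zero.mpr (by omega : K ≠ 0)
    have hKε : (K : ℝ) * (ε / (2 * K)) = ε / 2 := by
      field_simp
    linarith
  have htailb : (∑' k, |f (k + K)|) ≤ ∑' k, |α (k + K)| := by
    apply Summable.tsum_le_tsum (fun k => hfle (k + K))
    · exact hfsum.comp_injective (add_left_injective K)
    · exact hα.comp_injective (add_left_injective K)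
  linarith
end

section
/- Let E be a topological space, B a Banach space, and (f_n) a sequence of continuous functions from E to B. If the series Σ_n ‖f_n(x)‖ converges pointwise to a continuous real-valued function, then the series Σ_n f_n(x) converges in B for every x and its sum is a continuous function from E to B. -/
open Filter Topology

theorem continuous_tsum_of_continuous_norm_sum {E B : Type*} [TopologicalSpace E]
    [NormedAddCommGroup B] [NormedSpace ℝ B] [CompleteSpace B]
    (f : ℕ → E → B) (hf : ∀ n, Continuous (f n))
    (S : E → ℝ) (hS : Continuous S) (hsum : ∀ x, HasSum (fun n => ‖f n x‖) (S x)) :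
    (∀ x, Summable fun n => f n x) ∧ Continuous fun x => ∑' n, f n x := by
  have hsummable : ∀ x, Summable fun n => f n x := fun x => ((hsum x).summable).of_norm
  refine ⟨hsummable, ?_⟩
  have key : TendstoLocallyUniformly (fun N x => ∑ n ∈ Finset.range N, f n x)
      (fun x => ∑' n, f n x) atTop := by
    rw [Metric.tendstoLocallyUniformly_iff]
    intro ε hε x
    have htail : Tendsto (fun N => S x - ∑ n ∈ Finset.range N, ‖f n x‖) atTop (𝓝 0) := by
      have h := (hsum x).tendsto_sum_nat
      simpa using h.const_sub (S x)
    obtain ⟨N, hN⟩ := (htail.eventually (gt_mem_nhds (half_pos hε))).exists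
    set T : E → ℝ := fun y => S y - ∑ n ∈ Finset.range N, ‖f n y‖ with hTdef
    have hTcont : Continuous T := hS.sub (by continuity)
    have hVopen : IsOpen {y | T y < ε} := isOpen_lt hTcont continuous_const
    have hxV : x ∈ {y | T y < ε} := lt_of_lt_of_le hN (le_of_lt (half_lt_self hε))
    refine ⟨{y | T y < ε}, hVopen.mem_nhds hxV, ?_⟩
    filter_upwards [eventually_ge_atTop N] with n hn y hy
    have hsy := hsummable y
    have h1 : ∑ i ∈ Finset.range n, f i y + ∑' i, f (i + n) y = ∑' i, f i y :=
      Summable.sum_add_tsum_nat_add n hsy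
    have h2 : ∑ i ∈ Finset.range n, ‖f i y‖ + ∑' i, ‖f (i + n) y‖ = S y := by
      rw [Summable.sum_add_tsum_nat_add n (hsum y).summable, (hsum y).tsum_eq]
    have hnorm : ‖(∑' i, f i y) - ∑ i ∈ Finset.range n, f i y‖ ≤ ∑' i, ‖f (i + n) y‖ := by
      rw [← h1]
      simpa using norm_tsum_le_tsum_norm ((hsum y).summable.comp_injective
        (fun a b => by omega))
    have hmono : ∑ i ∈ Finset.range N, ‖f i y‖ ≤ ∑ i ∈ Finset.range n, ‖f i y‖ :=
      Finset.sum_le_sum_of_subset_of_nonneg (Finset.range_subset_range.2 hn)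
        (fun i _ _ => norm_nonneg _)
    have : dist (∑' i, f i y) (∑ i ∈ Finset.range n, f i y) < ε := by
      rw [dist_eq_norm]
      calc ‖(∑' i, f i y) - ∑ i ∈ Finset.range n, f i y‖
          ≤ ∑' i, ‖f (i + n) y‖ := hnorm
        _ = S y - ∑ i ∈ Finset.range n, ‖f i y‖ := by linarith
        _ ≤ T y := by simp only [hTdef]; linarith
        _ < ε := hy
    exact this
  exact key.continuous (Eventually.of_forall fun N => continuous_finset_sum _ fun i _ => hf i).frequently
end

section
/- Let E be a topological space, B a Banach space, (f_n) continuous functions from E to B converging pointwise to a continuous function f, and (g_n) a sequence of continuous functions from E to B such that for every x there exist a locally bounded function K : E → ℝ and N(x) ∈ ℕ with ‖g_p(y) − g_q(y)‖ ≤ K(y)‖f_p(y) − f_q(y)‖ for all p, q > N(x) and y near x. Then g_n converges pointwise to a continuous function. -/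
open Filter Topology

theorem dominated_sticky_limit_continuous {E B : Type*} [TopologicalSpace E]
    [NormedAddCommGroup B] [NormedSpace ℝ B] [CompleteSpace B]
    (f : ℕ → E → B) (hf : ∀ n, Continuous (f n)) (flim : E → B) (hflim : Continuous flim)
    (hpt : ∀ x, Filter.Tendsto (fun n => f n x) Filter.atTop (nhds (flim x)))
    (g : ℕ → E → B) (hg : ∀ n, Continuous (g n))
    (hdom : ∀ x : E, ∃ K : E → ℝ,
      (∀ z : E, ∃ U ∈ nhds z, ∃ M : ℝ, ∀ y ∈ U, K y ≤ M) ∧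
      ∃ N : ℕ, ∃ V ∈ nhds x, ∀ p > N, ∀ q > N, ∀ y ∈ V,
        ‖g p y - g q y‖ ≤ K y * ‖f p y - f q y‖) :
    ∃ glim : E → B, Continuous glim ∧
      ∀ x, Filter.Tendsto (fun n => g n x) Filter.atTop (nhds (glim x)) := by
  -- Step 1: for each x, (g n x) is a Cauchy sequence.
  have key : ∀ x, CauchySeq (fun n => g n x) := by
    intro x
    obtain ⟨K, hK, N, V, hV, hdomx⟩ := hdom x
    obtain ⟨U, hU, M, hM⟩ := hK x
    set M' := max M 1 with hM'def
    have hM'pos : (0:ℝ) < M' := lt_of_lt_of_le one_pos (le_max_right _ _)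
    have hxV : x ∈ V := mem_of_mem_nhds hV
    have hxU : x ∈ U := mem_of_mem_nhds hU
    rw [Metric.cauchySeq_iff]
    intro ε hε
    have hfC : CauchySeq (fun n => f n x) := (hpt x).cauchySeq
    rw [Metric.cauchySeq_iff] at hfC
    obtain ⟨N₂, hN₂⟩ := hfC (ε / M') (by positivity)
    refine ⟨max N N₂ + 1, fun p hp q hq => ?_⟩
    have hpN : p > N := by omega
    have hqN : q > N := by omega
    have h1 := hdomx p hpN q hqN x hxV
    have h2 : dist (f p x) (f q x) < ε / M' := hN₂ p (by omega) q (by omega)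
    rw [dist_eq_norm] at h2 ⊢
    calc ‖g p x - g q x‖ ≤ K x * ‖f p x - f q x‖ := h1
      _ ≤ M' * ‖f p x - f q x‖ :=
        mul_le_mul_of_nonneg_right ((hM x hxU).trans (le_max_left _ _)) (norm_nonneg _)
      _ < M' * (ε / M') := by
        exact mul_lt_mul_of_pos_left h2 hM'pos
      _ = ε := by field_simp
  choose glim hglim using fun x => cauchySeq_tendsto_of_complete (key x)
  refine ⟨glim, ?_, hglim⟩
  rw [continuous_iff_continuousAt]
  intro x
  rw [ContinuousAt, Metric.tendsto_nhds]
  intro ε hε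
  obtain ⟨K, hK, N, V, hV, hdomx⟩ := hdom x
  obtain ⟨U, hU, M, hM⟩ := hK x
  set M' := max M 1 with hM'def
  have hM'pos : (0:ℝ) < M' := lt_of_lt_of_le one_pos (le_max_right _ _)
  have hxV : x ∈ V := mem_of_mem_nhds hV
  have hxU : x ∈ U := mem_of_mem_nhds hU
  -- choose n₀ > N with ‖f n₀ x - flim x‖ small
  obtain ⟨N₃, hN₃⟩ := (Metric.tendsto_atTop.1 (hpt x)) (ε / (4 * M')) (by positivity)
  set n₀ := max (N + 1) N₃ with hn₀def
  have hn₀N : n₀ > N := lt_of_lt_of_le (Nat.lt_succ_self N) (le_max_left _ _)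
  have hfn₀ : ‖f n₀ x - flim x‖ < ε / (4 * M') := by
    have := hN₃ n₀ (le_max_right _ _)
    rwa [dist_eq_norm] at this
  -- key bound on V ∩ U
  have hb : ∀ y, y ∈ V → y ∈ U → ‖glim y - g n₀ y‖ ≤ M' * ‖flim y - f n₀ y‖ := by
    intro y hyV hyU
    have t1 : Tendsto (fun q => ‖g q y - g n₀ y‖) atTop (𝓝 ‖glim y - g n₀ y‖) :=
      ((hglim y).sub tendsto_const_nhds).norm
    have t2 : Tendsto (fun q => M' * ‖f q y - f n₀ y‖) atTop (𝓝 (M' * ‖flim y - f n₀ y‖)) :=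
      (((hpt y).sub tendsto_const_nhds).norm).const_mul M'
    have ev : ∀ᶠ q in atTop, ‖g q y - g n₀ y‖ ≤ M' * ‖f q y - f n₀ y‖ := by
      filter_upwards [eventually_gt_atTop N] with q hq
      calc ‖g q y - g n₀ y‖ ≤ K y * ‖f q y - f n₀ y‖ := hdomx q hq n₀ hn₀N y hyV
        _ ≤ M' * ‖f q y - f n₀ y‖ :=
          mul_le_mul_of_nonneg_right ((hM y hyU).trans (le_max_left _ _)) (norm_nonneg _)
    exact le_of_tendsto_of_tendsto t1 t2 ev
  -- continuous auxiliary function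
  set φ : E → ℝ := fun y => ‖g n₀ y - g n₀ x‖ + M' * ‖flim y - f n₀ y‖ with hφdef
  have hφcont : Continuous φ := by
    apply Continuous.add
    · exact ((hg n₀).sub continuous_const).norm
    · exact continuous_const.mul ((hflim.sub (hf n₀)).norm)
  have hφx : φ x < ε / 2 := by
    have : φ x = M' * ‖flim x - f n₀ x‖ := by simp [hφdef]
    rw [this, norm_sub_rev]
    calc M' * ‖f n₀ x - flim x‖ < M' * (ε / (4 * M')) :=
          mul_lt_mul_of_pos_left hfn₀ hM'pos
      _ = ε / 4 := by field_simp
      _ < ε / 2 := by linarith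
  have hW : ∀ᶠ y in 𝓝 x, φ y < ε / 2 :=
    (hφcont.continuousAt (x := x)).eventually_lt_const hφx
  filter_upwards [hW, hV, hU] with y hyW hyV hyU
  rw [dist_eq_norm]
  have h1 : ‖glim y - glim x‖ ≤ ‖glim y - g n₀ y‖ + ‖g n₀ y - g n₀ x‖ + ‖g n₀ x - glim x‖ := by
    have := norm_add₃_le (a := glim y - g n₀ y) (b := g n₀ y - g n₀ x) (c := g n₀ x - glim x)
    simpa using this
  have h2 : ‖glim y - g n₀ y‖ ≤ M' * ‖flim y - f n₀ y‖ := hb y hyV hyU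
  have h3 : ‖g n₀ x - glim x‖ ≤ M' * ‖flim x - f n₀ x‖ := by
    rw [norm_sub_rev]; exact hb x hxV hxU
  have h4 : M' * ‖flim x - f n₀ x‖ < ε / 4 := by
    rw [norm_sub_rev]
    calc M' * ‖f n₀ x - flim x‖ < M' * (ε / (4 * M')) := mul_lt_mul_of_pos_left hfn₀ hM'pos
      _ = ε / 4 := by field_simp
  have h5 : M' * ‖flim y - f n₀ y‖ + ‖g n₀ y - g n₀ x‖ < ε / 2 := by
    have : φ y = ‖g n₀ y - g n₀ x‖ + M' * ‖flim y - f n₀ y‖ := rfl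
    linarith [hyW]
  linarith
end

section
/- (Grothendieck) Let E be a topological space and H a set of continuous real-valued functions on E satisfying the Eberlein–Grothendieck criterion with respect to a dense set E₁ ⊆ E. Then every pointwise limit of a net of elements of H is continuous. Concretely: if f is in the pointwise closure of H and f is discontinuous at some x₀ ∈ E, one can construct sequences (f_i) in H and (x_j) in E₁ with |f_n(x_i) − f(x_i)| ≤ 1/n for i < n, |f_i(x_n) − f_i(x₀)| ≤ 1/n for i ≤ n, and |f(x_n) − f(x₀)| ≥ ε, contradicting the existence of a double cluster point of (f_i(x_j)). -/
open Filter Topology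

/-- `y` is a double cluster point of the double sequence `σ`: every neighbourhood of `y`
meets infinitely many rows each along infinitely many points, and likewise infinitely many
columns each along infinitely many points. -/
def DoubleClusterPt (y : ℝ) (σ : ℕ → ℕ → ℝ) : Prop :=
  ∀ V ∈ nhds y,
    {n : ℕ | {i : ℕ | σ n i ∈ V}.Infinite}.Infinite ∧
    {i : ℕ | {n : ℕ | σ n i ∈ V}.Infinite}.Infinite

/-- Strong recursion with data: `seqRec g n = g n (previous values)`. -/
private noncomputable def seqRec {α : Type*} (g : (n : ℕ) → ((i : ℕ) → i < n → α) → α) :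
    ℕ → α
  | n => g n fun i hi => seqRec g i
termination_by n => n
decreasing_by exact hi

private theorem seqRec_eq {α : Type*} (g : (n : ℕ) → ((i : ℕ) → i < n → α) → α) (n : ℕ) :
    seqRec g n = g n (fun i _ => seqRec g i) := by
  rw [seqRec]

private theorem tendsto_of_dist_lt_one_div {a : ℝ} {v : ℕ → ℝ} {m : ℕ}
    (h : ∀ n, m ≤ n → dist (v n) a < 1 / (n + 1)) :
    Tendsto v atTop (𝓝 a) := by
  rw [Metric.tendsto_atTop]
  intro ε hε
  obtain ⟨N, hN⟩ := exists_nat_one_div_lt hε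
  refine ⟨max m N, fun n hn => ?_⟩
  have h1 : m ≤ n := le_trans (le_max_left _ _) hn
  have h2 : N ≤ n := le_trans (le_max_right _ _) hn
  have h3 : (1 : ℝ) / (n + 1) ≤ 1 / (N + 1) := by
    apply one_div_le_one_div_of_le
    · positivity
    · have : (N : ℝ) ≤ n := Nat.cast_le.mpr h2
      linarith
  exact ((h n h1).trans_le h3).trans hN

private theorem dist_le_of_infinite_mem_ball {y L δ : ℝ} {v : ℕ → ℝ}
    (hinf : {n | v n ∈ Metric.ball y δ}.Infinite) (hlim : Tendsto v atTop (𝓝 L)) :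
    dist L y ≤ δ := by
  have hfreq : ∃ᶠ n in atTop, v n ∈ Metric.ball y δ :=
    Nat.frequently_atTop_iff_infinite.mpr hinf
  have h1 : L ∈ closure (Metric.ball y δ) := mem_closure_of_frequently_of_tendsto hfreq hlim
  exact Metric.mem_closedBall.mp (Metric.closure_ball_subset_closedBall h1)

private theorem stageA {E : Type*} [TopologicalSpace E]
    (H : Set (E → ℝ)) (hH : ∀ f ∈ H, Continuous f)
    (E₁ : Set E) (hdense : Dense E₁)
    (hEG : ∀ f : ℕ → E → ℝ, (∀ n, f n ∈ H) → ∀ x : ℕ → E, (∀ i, x i ∈ E₁) →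
      ∃ y : ℝ, DoubleClusterPt y fun n i => f n (x i))
    (f : E → ℝ) (hf : f ∈ @closure (E → ℝ) (Pi.topologicalSpace) H)
    (x₀ : E) (ε : ℝ) (hε : 0 < ε) :
    ∃ U ∈ 𝓝 x₀, ∀ x ∈ U, x ∈ E₁ → |f x - f x₀| < ε := by
  classical
  by_contra hcon
  push_neg at hcon
  -- hcon : ∀ U ∈ 𝓝 x₀, ∃ x ∈ U, x ∈ E₁ ∧ ε ≤ |f x - f x₀|
  -- Approximation from the pointwise closure on finitely many points.
  have approx : ∀ (s : Finset E) (δ : ℝ), 0 < δ →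
      ∃ g ∈ H, ∀ x ∈ s, dist (g x) (f x) < δ := by
    intro s δ hδ
    have hmem : {g : E → ℝ | ∀ x ∈ s, dist (g x) (f x) < δ} ∈ 𝓝 f := by
      have hset : {g : E → ℝ | ∀ x ∈ s, dist (g x) (f x) < δ}
          = ⋂ x ∈ s, (fun g : E → ℝ => g x) ⁻¹' Metric.ball (f x) δ := by
        ext g
        simp [Metric.mem_ball]
      rw [hset]
      refine (Filter.biInter_finset_mem s).mpr fun x _ => ?_
      exact (continuous_apply x).continuousAt.preimage_mem_nhds (Metric.ball_mem_nhds _ hδ)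
    obtain ⟨g, hg1, hg2⟩ := mem_closure_iff_nhds.mp hf _ hmem
    exact ⟨g, hg2, hg1⟩
  -- One step of the interleaved construction.
  have step : ∀ (n : ℕ) (pref : (i : ℕ) → i < n → (E → ℝ) × E),
      ∃ p : (E → ℝ) × E, p.1 ∈ H ∧
        dist (p.1 x₀) (f x₀) < 1 / (n + 1) ∧
        (∀ i, ∀ hi : i < n, dist (p.1 (pref i hi).2) (f (pref i hi).2) < 1 / (n + 1)) ∧
        ((∀ i, ∀ hi : i < n, (pref i hi).1 ∈ H) →
          p.2 ∈ E₁ ∧ ε ≤ |f p.2 - f x₀| ∧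
          dist (p.1 p.2) (p.1 x₀) < 1 / (n + 1) ∧
          (∀ i, ∀ hi : i < n, dist ((pref i hi).1 p.2) ((pref i hi).1 x₀) < 1 / (n + 1))) := by
    intro n pref
    have hpos : (0 : ℝ) < 1 / (n + 1) := by positivity
    obtain ⟨g, hgH, hg⟩ := approx
      (insert x₀ (Finset.image (fun i : Fin n => (pref i i.isLt).2) Finset.univ)) _ hpos
    by_cases hprefH : ∀ i, ∀ hi : i < n, (pref i hi).1 ∈ H
    · -- all previous functions are continuous, get a good point
      set U : Set E := (g ⁻¹' Metric.ball (g x₀) (1 / (n + 1))) ∩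
          ⋂ i : Fin n, ((pref i i.isLt).1 ⁻¹' Metric.ball ((pref i i.isLt).1 x₀) (1 / (n + 1)))
        with hUdef
      have hUnhds : U ∈ 𝓝 x₀ := by
        refine Filter.inter_mem ?_ ((Filter.iInter_mem).mpr fun i => ?_)
        · exact (hH g hgH).continuousAt.preimage_mem_nhds (Metric.ball_mem_nhds _ hpos)
        · exact ((hH _ (hprefH i i.isLt)).continuousAt).preimage_mem_nhds
            (Metric.ball_mem_nhds _ hpos)
      obtain ⟨x, hxU, hxE₁, hxf⟩ := hcon U hUnhds
      refine ⟨(g, x), hgH, ?_, ?_, fun _ => ⟨hxE₁, hxf, ?_, ?_⟩⟩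
      · exact hg x₀ (Finset.mem_insert_self _ _)
      · intro i hi
        exact hg _ (Finset.mem_insert_of_mem
          (Finset.mem_image.mpr ⟨⟨i, hi⟩, Finset.mem_univ _, rfl⟩))
      · exact hxU.1
      · intro i hi
        have := Set.mem_iInter.mp hxU.2 ⟨i, hi⟩
        exact this
    · refine ⟨(g, x₀), hgH, ?_, ?_, fun h => absurd h hprefH⟩
      · exact hg x₀ (Finset.mem_insert_self _ _)
      · intro i hi
        exact hg _ (Finset.mem_insert_of_mem
          (Finset.mem_image.mpr ⟨⟨i, hi⟩, Finset.mem_univ _, rfl⟩))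
  -- Build the interleaved sequences.
  set u : ℕ → (E → ℝ) × E :=
    seqRec (fun n pref => Classical.choose (step n pref)) with hu_def
  have hu : ∀ n, (u n).1 ∈ H ∧
      dist ((u n).1 x₀) (f x₀) < 1 / (n + 1) ∧
      (∀ i, ∀ _ : i < n, dist ((u n).1 (u i).2) (f (u i).2) < 1 / (n + 1)) ∧
      ((∀ i, ∀ _ : i < n, (u i).1 ∈ H) →
        (u n).2 ∈ E₁ ∧ ε ≤ |f (u n).2 - f x₀| ∧
        dist ((u n).1 (u n).2) ((u n).1 x₀) < 1 / (n + 1) ∧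
        (∀ i, ∀ _ : i < n, dist ((u i).1 (u n).2) ((u i).1 x₀) < 1 / (n + 1))) := by
    intro n
    have h1 : u n = Classical.choose (step n (fun i _ => u i)) := by
      rw [hu_def]
      exact seqRec_eq _ n
    rw [h1]
    exact Classical.choose_spec (step n (fun i _ => u i))
  set F : ℕ → E → ℝ := fun n => (u n).1 with hF
  set X : ℕ → E := fun n => (u n).2 with hX
  have hFH : ∀ n, F n ∈ H := fun n => (hu n).1
  have hx : ∀ n, X n ∈ E₁ ∧ ε ≤ |f (X n) - f x₀| ∧
      dist (F n (X n)) (F n x₀) < 1 / (n + 1) ∧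
      (∀ i, ∀ _ : i < n, dist (F i (X n)) (F i x₀) < 1 / (n + 1)) :=
    fun n => (hu n).2.2.2 (fun i _ => hFH i)
  -- column limits
  have hcol : ∀ i, Tendsto (fun n => F n (X i)) atTop (𝓝 (f (X i))) := by
    intro i
    exact tendsto_of_dist_lt_one_div (m := i + 1) (fun n hn => (hu n).2.2.1 i hn)
  -- row limits
  have hrow : ∀ n, Tendsto (fun i => F n (X i)) atTop (𝓝 (F n x₀)) := by
    intro n
    refine tendsto_of_dist_lt_one_div (m := n) (fun i hi => ?_)
    rcases hi.lt_or_eq with h | h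
    · exact (hx i).2.2.2 n h
    · subst h
      exact (hx n).2.2.1
  obtain ⟨y, hy⟩ := hEG F hFH X (fun n => (hx n).1)
  have h3 : (0 : ℝ) < ε / 3 := by linarith
  obtain ⟨hrows, hcols⟩ := hy (Metric.ball y (ε / 3)) (Metric.ball_mem_nhds _ h3)
  obtain ⟨i₀, hi₀⟩ := hcols.nonempty
  have hA : dist (f (X i₀)) y ≤ ε / 3 := dist_le_of_infinite_mem_ball hi₀ (hcol i₀)
  have hB : dist (f x₀) y ≤ ε / 3 := by
    refine le_of_forall_pos_le_add fun η hη => ?_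
    obtain ⟨N, hN⟩ := exists_nat_one_div_lt hη
    obtain ⟨n, hnS, hn⟩ := Set.Infinite.exists_gt hrows N
    have h1 : dist (F n x₀) y ≤ ε / 3 := dist_le_of_infinite_mem_ball hnS (hrow n)
    have h2 : dist (f x₀) (F n x₀) < 1 / (n + 1) := by
      rw [dist_comm]
      exact (hu n).2.1
    have h4 : (1 : ℝ) / (n + 1) ≤ 1 / (N + 1) := by
      apply one_div_le_one_div_of_le
      · positivity
      · have : (N : ℝ) ≤ n := Nat.cast_le.mpr hn.le
        linarith
    calc dist (f x₀) y ≤ dist (f x₀) (F n x₀) + dist (F n x₀) y := dist_triangle _ _ _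
      _ ≤ ε / 3 + η := by
          have := h4.trans_lt hN
          linarith
  have hfar : ε ≤ dist (f (X i₀)) (f x₀) := by
    rw [Real.dist_eq]
    exact (hx i₀).2.1
  have htri : dist (f (X i₀)) (f x₀) ≤ dist (f (X i₀)) y + dist (f x₀) y := by
    rw [dist_comm (f x₀) y]
    exact dist_triangle _ _ _
  linarith

theorem grothendieck_pointwise_limit_continuous {E : Type*} [TopologicalSpace E] [T2Space E]
    (H : Set (E → ℝ)) (hH : ∀ f ∈ H, Continuous f)
    (E₁ : Set E) (hdense : Dense E₁)
    (hEG : ∀ f : ℕ → E → ℝ, (∀ n, f n ∈ H) → ∀ x : ℕ → E, (∀ i, x i ∈ E₁) →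
      ∃ y : ℝ, DoubleClusterPt y fun n i => f n (x i)) :
    ∀ f ∈ @closure (E → ℝ) (Pi.topologicalSpace) H, Continuous f := by
  intro f hf
  have key : ∀ (x : E) (δ : ℝ), 0 < δ → ∃ U ∈ 𝓝 x, ∀ z ∈ U, z ∈ E₁ → |f z - f x| < δ :=
    fun x δ hδ => stageA H hH E₁ hdense hEG f hf x δ hδ
  rw [continuous_iff_continuousAt]
  intro x₀
  rw [ContinuousAt, Metric.tendsto_nhds]
  intro ε hε
  have h3 : 0 < ε / 3 := by linarith
  obtain ⟨U₀, hU₀, hU₀'⟩ := key x₀ (ε / 3) h3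
  have hmem : interior U₀ ∈ 𝓝 x₀ := interior_mem_nhds.mpr hU₀
  filter_upwards [hmem] with x hxU
  obtain ⟨V, hV, hV'⟩ := key x (ε / 3) h3
  have hxV : x ∈ interior V := mem_interior_iff_mem_nhds.mpr hV
  have hopen : IsOpen (interior U₀ ∩ interior V) := isOpen_interior.inter isOpen_interior
  obtain ⟨z, hzE₁, hz⟩ := hdense.exists_mem_open hopen ⟨x, hxU, hxV⟩
  have e1 : |f z - f x₀| < ε / 3 := hU₀' z (interior_subset hz.1) hzE₁
  have e2 : |f z - f x| < ε / 3 := hV' z (interior_subset hz.2) hzE₁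
  rw [Real.dist_eq]
  have habs : |f x - f x₀| ≤ |f x - f z| + |f z - f x₀| := abs_sub_le _ _ _
  have hcomm : |f x - f z| = |f z - f x| := abs_sub_comm _ _
  linarith
end

section
/- Define on the space ℓ^∞ of bounded real sequences the norm ‖u‖_s = Σ_k 2^{−k}|u(k)| + limsup_k |u(k)|. Then ‖·‖_s is a norm on ℓ^∞, and the space c₀ of sequences converging to zero is closed in ℓ^∞ with respect to ‖·‖_s. -/
open Filter Topology

/-- A real sequence is bounded. -/
def IsBddSeq (u : ℕ → ℝ) : Prop := ∃ M : ℝ, ∀ k, |u k| ≤ M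

/-- The sticky norm `‖u‖ₛ = Σ_k 2^{-k} |u(k)| + limsup_k |u(k)|` on `ℓ^∞`. -/
noncomputable def sNorm (u : ℕ → ℝ) : ℝ :=
  (∑' k : ℕ, (1/2 : ℝ)^k * |u k|) + Filter.limsup (fun k => |u k|) Filter.atTop

private lemma bddAbove_abs {u : ℕ → ℝ} (h : IsBddSeq u) :
    IsBoundedUnder (· ≤ ·) atTop (fun k => |u k|) := by
  obtain ⟨M, hM⟩ := h
  exact isBoundedUnder_of ⟨M, hM⟩

private lemma bddBelow_abs (u : ℕ → ℝ) :
    IsBoundedUnder (· ≥ ·) atTop (fun k => |u k|) :=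
  isBoundedUnder_of ⟨0, fun k => abs_nonneg _⟩

private lemma limsup_abs_nonneg {u : ℕ → ℝ} (h : IsBddSeq u) :
    0 ≤ limsup (fun k => |u k|) atTop :=
  le_limsup_of_frequently_le (Frequently.of_forall fun k => abs_nonneg _) (bddAbove_abs h)

private lemma summable_part {u : ℕ → ℝ} (h : IsBddSeq u) :
    Summable (fun k => (1/2 : ℝ)^k * |u k|) := by
  obtain ⟨M, hM⟩ := h
  refine Summable.of_nonneg_of_le (fun k => by positivity)
    (fun k => ?_) ((summable_geometric_of_lt_one (by norm_num : (0:ℝ) ≤ 1/2) (by norm_num)).mul_right M)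
  exact mul_le_mul_of_nonneg_left (hM k) (by positivity)

private lemma tsum_part_nonneg (u : ℕ → ℝ) :
    0 ≤ ∑' k : ℕ, (1/2 : ℝ)^k * |u k| :=
  tsum_nonneg fun k => by positivity

theorem sNorm_is_norm_and_c0_closed :
    (∀ u : ℕ → ℝ, IsBddSeq u → 0 ≤ sNorm u) ∧
    (∀ u : ℕ → ℝ, IsBddSeq u → (sNorm u = 0 ↔ u = 0)) ∧
    (∀ u : ℕ → ℝ, IsBddSeq u → ∀ c : ℝ, sNorm (fun k => c * u k) = |c| * sNorm u) ∧
    (∀ u v : ℕ → ℝ, IsBddSeq u → IsBddSeq v →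
      sNorm (fun k => u k + v k) ≤ sNorm u + sNorm v) ∧
    (∀ u : ℕ → ℝ, IsBddSeq u →
      (∀ ε > (0:ℝ), ∃ v : ℕ → ℝ, IsBddSeq v ∧
        Filter.Tendsto v Filter.atTop (nhds 0) ∧ sNorm (fun k => u k - v k) < ε) →
      Filter.Tendsto u Filter.atTop (nhds 0)) := by
  refine ⟨?_, ?_, ?_, ?_, ?_⟩
  · intro u hu
    exact add_nonneg (tsum_part_nonneg u) (limsup_abs_nonneg hu)
  · intro u hu
    constructor
    · intro h
      have hts : (∑' k : ℕ, (1/2 : ℝ)^k * |u k|) = 0 := by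
        have := limsup_abs_nonneg hu
        have := tsum_part_nonneg u
        unfold sNorm at h
        linarith
      funext k
      have hle : (1/2 : ℝ)^k * |u k| ≤ 0 := hts ▸
        Summable.le_tsum (summable_part hu) k (fun j _ => by positivity)
      have : |u k| = 0 := by
        have h2 : (0:ℝ) < (1/2 : ℝ)^k := by positivity
        nlinarith [abs_nonneg (u k)]
      simpa [abs_eq_zero] using this
    · rintro rfl
      simp [sNorm]
  · intro u hu c
    unfold sNorm
    have h1 : (∑' k : ℕ, (1/2 : ℝ)^k * |c * u k|) = |c| * ∑' k : ℕ, (1/2 : ℝ)^k * |u k| := by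
      rw [← tsum_mul_left]
      congr 1; funext k; rw [abs_mul]; ring
    have h2 : limsup (fun k => |c * u k|) atTop = |c| * limsup (fun k => |u k|) atTop := by
      rcases eq_or_ne c 0 with rfl | hc
      · simp [limsup_const]
      · have hc' : 0 < |c| := abs_pos.mpr hc
        have := (OrderIso.mulLeft₀ |c| hc').limsup_apply (f := atTop)
          (u := fun k => |u k|) (bddAbove_abs hu)
          ((bddBelow_abs u).isCoboundedUnder_le)
          ?_ ?_
        · simpa [OrderIso.mulLeft₀_apply, abs_mul, Function.comp] using this.symm
        · obtain ⟨M, hM⟩ := hu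
          exact isBoundedUnder_of ⟨|c| * M, fun k =>
            mul_le_mul_of_nonneg_left (hM k) (abs_nonneg c)⟩
        · exact IsBoundedUnder.isCoboundedUnder_le (isBoundedUnder_of ⟨0, fun k => mul_nonneg (abs_nonneg c) (abs_nonneg _)⟩)
    rw [h1, h2, mul_add]
  · intro u v hu hv
    unfold sNorm
    have h1 : (∑' k : ℕ, (1/2 : ℝ)^k * |u k + v k|) ≤
        (∑' k : ℕ, (1/2 : ℝ)^k * |u k|) + ∑' k : ℕ, (1/2 : ℝ)^k * |v k| := by
      rw [← Summable.tsum_add (summable_part hu) (summable_part hv)]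
      refine Summable.tsum_le_tsum (fun k => ?_) ?_ ((summable_part hu).add (summable_part hv))
      · rw [← mul_add]
        exact mul_le_mul_of_nonneg_left (abs_add_le _ _) (by positivity)
      · refine Summable.of_nonneg_of_le (fun k => by positivity) (fun k => ?_)
          ((summable_part hu).add (summable_part hv))
        rw [← mul_add]
        exact mul_le_mul_of_nonneg_left (abs_add_le _ _) (by positivity)
    have h2 : limsup (fun k => |u k + v k|) atTop ≤
        limsup (fun k => |u k|) atTop + limsup (fun k => |v k|) atTop := by
      refine le_trans ?_ (limsup_add_le (bddBelow_abs u) (bddAbove_abs hu)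
        ((bddBelow_abs v).isCoboundedUnder_le) (bddAbove_abs hv))
      refine limsup_le_limsup (Eventually.of_forall fun k => abs_add_le _ _) ?_ ?_
      · exact ((bddBelow_abs _).isCoboundedUnder_le)
      · obtain ⟨M, hM⟩ := hu; obtain ⟨N, hN⟩ := hv
        exact isBoundedUnder_of ⟨M + N, fun k => add_le_add (hM k) (hN k)⟩
    linarith
  · intro u hu happrox
    have key : limsup (fun k => |u k|) atTop ≤ 0 := by
      by_contra hpos
      push_neg at hpos
      obtain ⟨v, hvb, hv0, hvε⟩ := happrox _ hpos
      have hw : IsBddSeq (fun k => u k - v k) := by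
        obtain ⟨M, hM⟩ := hu; obtain ⟨N, hN⟩ := hvb
        exact ⟨M + N, fun k => (abs_sub _ _).trans (add_le_add (hM k) (hN k))⟩
      have h1 : limsup (fun k => |u k|) atTop ≤
          limsup (fun k => |u k - v k|) atTop + limsup (fun k => |v k|) atTop := by
        refine le_trans ?_ (limsup_add_le (bddBelow_abs _) (bddAbove_abs hw)
          ((bddBelow_abs v).isCoboundedUnder_le) (bddAbove_abs hvb))
        refine limsup_le_limsup (Eventually.of_forall fun k => ?_) ?_ ?_
        · simpa using abs_add_le (u k - v k) (v k)
        · exact (bddBelow_abs _).isCoboundedUnder_le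
        · obtain ⟨M, hM⟩ := hw; obtain ⟨N, hN⟩ := hvb
          exact isBoundedUnder_of ⟨M + N, fun k => add_le_add (hM k) (hN k)⟩
      have h2 : limsup (fun k => |v k|) atTop = 0 := by
        have : Tendsto (fun k => |v k|) atTop (𝓝 0) := by
          simpa using hv0.abs
        exact this.limsup_eq
      have h3 : limsup (fun k => |u k - v k|) atTop ≤ sNorm (fun k => u k - v k) := by
        unfold sNorm
        have := tsum_part_nonneg (fun k => u k - v k)
        linarith
      linarith
    have habs : Tendsto (fun k => |u k|) atTop (𝓝 0) := by
      refine tendsto_of_le_liminf_of_limsup_le ?_ key (bddAbove_abs hu) (bddBelow_abs u)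
      exact le_liminf_of_le (bddAbove_abs hu).isCoboundedUnder_ge
        (Eventually.of_forall fun k => abs_nonneg _)
    exact tendsto_zero_iff_abs_tendsto_zero u |>.mpr habs
end
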